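/- Let X be a Fréchet–Urysohn topological space, Y a regular Hausdorff topological space, and D a dense subset of X. A continuous map f : D → Y extends to a continuous map f̃ : X → Y if and only if for every sequence (x_n) of points of D converging in X, the sequence (f(x_n)) converges in Y. -/
import Mathlib


open Filter Topology

/-- On a Fréchet–Urysohn space `X`, a continuous map `f` defined on a dense
subset `D` with values in a regular Hausdorff space extends continuously to `X` iff images
under `f` of sequences in `D` converging in `X` converge in `Y`. -/
theorem continuous_extension_iff_sequences_converge
    {X Y : Type*} [TopologicalSpace X] [FrechetUrysohnSpace X] [TopologicalSpace Y]
    [RegularSpace Y] [T2Space Y]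
    (D : Set X) (hD : Dense D) (f : D → Y) (hf : Continuous f) :
    (∃ g : X → Y, Continuous g ∧ ∀ d : D, g d = f d) ↔
      ∀ (u : ℕ → D) (x : X), Tendsto (fun n => (u n : X)) atTop (𝓝 x) →
        ∃ y : Y, Tendsto (fun n => f (u n)) atTop (𝓝 y) := by
  constructor
  · rintro ⟨g, hg, hgf⟩ u x hu
    refine ⟨g x, ?_⟩
    have : Tendsto (fun n => g (u n : X)) atTop (𝓝 (g x)) :=
      (hg.tendsto x).comp hu
    simpa [hgf] using this
  · intro h
    have di : IsDenseInducing ((↑) : D → X) := hD.isDenseEmbedding_val.toIsDenseInducing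
    have key : ∀ x : X, ∃ y : Y, Tendsto f (comap (↑) (𝓝 x)) (𝓝 y) := by
      intro x
      -- get a sequence in D converging to x
      have hx : x ∈ closure D := hD x
      rw [mem_closure_iff_seq_limit] at hx
      obtain ⟨u', hu'D, hu'⟩ := hx
      set u : ℕ → D := fun n => ⟨u' n, hu'D n⟩ with hu_def
      have huX : Tendsto (fun n => (u n : X)) atTop (𝓝 x) := hu'
      obtain ⟨y, hy⟩ := h u x huX
      refine ⟨y, ?_⟩
      by_contra hcon
      rw [tendsto_def] at hcon
      push_neg at hcon
      obtain ⟨V, hV, hVmem⟩ := hcon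
      -- so f ⁻¹' V ∉ comap; hence every nbhd of x meets {d | f d ∉ V}
      have hmeets : ∀ U ∈ 𝓝 x, ∃ d : D, (d : X) ∈ U ∧ f d ∉ V := by
        intro U hU
        by_contra hno
        push_neg at hno
        exact hVmem (mem_comap.2 ⟨U, hU, fun d hd => hno d hd⟩)
      have hxcl : x ∈ closure ((↑) '' {d : D | f d ∉ V} : Set X) := by
        rw [mem_closure_iff_nhds]
        intro U hU
        obtain ⟨d, hdU, hdV⟩ := hmeets U hU
        exact ⟨d, hdU, ⟨d, hdV, rfl⟩⟩
      rw [mem_closure_iff_seq_limit] at hxcl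
      obtain ⟨v', hv'mem, hv'⟩ := hxcl
      choose v hv hveq using hv'mem
      have hvX : Tendsto (fun n => (v n : X)) atTop (𝓝 x) := by
        simpa [hveq] using hv'
      -- interleave u and v
      set w : ℕ → D := fun n => if Even n then u (n / 2) else v (n / 2) with hw_def
      have hwX : Tendsto (fun n => (w n : X)) atTop (𝓝 x) := by
        rw [tendsto_atTop'] at huX hvX ⊢
        intro U hU
        obtain ⟨N1, hN1⟩ := huX U hU
        obtain ⟨N2, hN2⟩ := hvX U hU
        refine ⟨2 * max N1 N2 + 2, fun n hn => ?_⟩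
        simp only [hw_def]
        split_ifs with he
        · exact hN1 _ (le_trans (le_max_left N1 N2) (by omega))
        · exact hN2 _ (le_trans (le_max_right N1 N2) (by omega))
      obtain ⟨c, hc⟩ := h w x hwX
      have hue : Tendsto (fun n => f (w (2 * n))) atTop (𝓝 c) :=
        hc.comp (tendsto_atTop_atTop.2 fun b => ⟨b, fun a ha => by omega⟩)
      have hvo : Tendsto (fun n => f (w (2 * n + 1))) atTop (𝓝 c) :=
        hc.comp (tendsto_atTop_atTop.2 fun b => ⟨b, fun a ha => by omega⟩)
      have hue' : Tendsto (fun n => f (u n)) atTop (𝓝 c) := by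
        have : ∀ n, w (2 * n) = u n := by
          intro n
          simp [hw_def, Nat.even_iff, Nat.mul_div_cancel_left n (by norm_num : 0 < 2)]
        simpa [this] using hue
      have hvo' : Tendsto (fun n => f (v n)) atTop (𝓝 c) := by
        have : ∀ n, w (2 * n + 1) = v n := by
          intro n
          have h1 : (2 * n + 1) / 2 = n := by omega
          have h2 : ¬ Even (2 * n + 1) := by
            simp [Nat.even_iff]
          simp [hw_def, h2, h1]
        simpa [this] using hvo
      have hyc : y = c := tendsto_nhds_unique hy hue'
      subst hyc
      -- f (v n) → y but f (v n) ∉ V ∈ 𝓝 y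
      obtain ⟨n, hn⟩ := (hvo'.eventually_mem hV).exists
      exact hv n hn
    refine ⟨di.extend f, di.continuous_extend key, fun d => di.extend_eq hf d⟩
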